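/- Let ℓ and m be axiomatic length functions on a group G that have compatible combinatorics and are coherently oriented. Then ℓ + m satisfies length-function axiom V: for all g, h ∈ G with (ℓ+m)(g) > 0 and (ℓ+m)(h) > 0, either (ℓ+m)(gh) = (ℓ+m)(gh⁻¹) > (ℓ+m)(g) + (ℓ+m)(h), or max{(ℓ+m)(gh), (ℓ+m)(gh⁻¹)} = (ℓ+m)(g) + (ℓ+m)(h). -/

import Mathlib

/-- An axiomatic length function on a group `G` (Culler–Morgan / Parry axioms I–VI). -/
def IsLengthFunction {G : Type*} [Group G] (ℓ : G → ℝ) : Prop :=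
  (∀ g : G, 0 ≤ ℓ g) ∧
  -- (I)
  ℓ 1 = 0 ∧
  -- (II)
  (∀ g : G, ℓ g = ℓ g⁻¹) ∧
  -- (III)
  (∀ g h : G, ℓ (h * g * h⁻¹) = ℓ g) ∧
  -- (IV)
  (∀ g h : G, ℓ (g * h) = ℓ (g * h⁻¹) ∨
    max (ℓ (g * h)) (ℓ (g * h⁻¹)) ≤ ℓ g + ℓ h) ∧
  -- (V)
  (∀ g h : G, 0 < ℓ g → 0 < ℓ h →
    (ℓ (g * h) = ℓ (g * h⁻¹) ∧ ℓ g + ℓ h < ℓ (g * h)) ∨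
    max (ℓ (g * h)) (ℓ (g * h⁻¹)) = ℓ g + ℓ h) ∧
  -- (VI)
  (∃ g h : G, 0 < ℓ g + ℓ h - ℓ (g * h⁻¹) ∧
    ℓ g + ℓ h - ℓ (g * h⁻¹) < 2 * min (ℓ g) (ℓ h))

/-- The overlap set `O^ℓ`: pairs of distinct elements with `ℓ(gh) ≠ ℓ(gh⁻¹)`. -/
def OverlapSet {G : Type*} [Group G] (ℓ : G → ℝ) : Set (G × G) :=
  {p : G × G | p.1 ≠ p.2 ∧ ℓ (p.1 * p.2) ≠ ℓ (p.1 * p.2⁻¹)}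

/-- The disjoint set `D^ℓ`: pairs of distinct elements with
`ℓ(gh) = ℓ(gh⁻¹) > ℓ(g) + ℓ(h)`. -/
def DisjointSet {G : Type*} [Group G] (ℓ : G → ℝ) : Set (G × G) :=
  {p : G × G | p.1 ≠ p.2 ∧ ℓ (p.1 * p.2) = ℓ (p.1 * p.2⁻¹) ∧
    ℓ p.1 + ℓ p.2 < ℓ (p.1 * p.2)}

/-- `ℓ` and `m` have compatible combinatorics if `O^ℓ ∩ D^m = ∅ = D^ℓ ∩ O^m`. -/
def CompatibleCombinatorics {G : Type*} [Group G] (ℓ m : G → ℝ) : Prop :=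
  OverlapSet ℓ ∩ DisjointSet m = ∅ ∧ DisjointSet ℓ ∩ OverlapSet m = ∅

/-- `ℓ` and `m` are coherently oriented if on `O^ℓ ∩ O^m` the strict inequalities
`ℓ(gh⁻¹) < ℓ(gh)` and `m(gh⁻¹) < m(gh)` are equivalent. -/
def CoherentlyOriented {G : Type*} [Group G] (ℓ m : G → ℝ) : Prop :=
  ∀ p ∈ OverlapSet ℓ ∩ OverlapSet m,
    (ℓ (p.1 * p.2⁻¹) < ℓ (p.1 * p.2) ↔ m (p.1 * p.2⁻¹) < m (p.1 * p.2))

/-- `(g,h)` is a good pair for `ℓ` if `0 < ℓ(g)+ℓ(h)−ℓ(gh⁻¹) < 2·min{ℓ(g),ℓ(h)}`. -/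
def GoodPair {G : Type*} [Group G] (ℓ : G → ℝ) (g h : G) : Prop :=
  0 < ℓ g + ℓ h - ℓ (g * h⁻¹) ∧
  ℓ g + ℓ h - ℓ (g * h⁻¹) < 2 * min (ℓ g) (ℓ h)


/-!
For a single length function, axiom V at `(g, h)` can only fail when one of `ℓ g`, `ℓ h` vanishes,
say `ℓ g = 0` while `m g > 0`. If then both `ℓ (g h)` and `ℓ (g h⁻¹)` were shorter than `ℓ h`, a
chain of pairs forced into `D^ℓ` (such as `(g h, g⁻¹)` and `(g, h g h⁻¹)`) would, by compatibility,
force equalities `m (x y) = m (x y⁻¹)` that make `m` violate axiom V at `(g, h)`. So each of `ℓ` and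
`m` separately satisfies the dichotomy of axiom V at `(g, h)`, and compatibility together with the
coherent orientation lets the two dichotomies be added.
-/

section

variable {G : Type*} [Group G]

theorem max_add_add_eq_max_add_max {α : Type*} [AddCommMonoid α] [LinearOrder α]
    [IsOrderedAddMonoid α] {a b c d : α} (h : (a ≤ b ∧ c ≤ d) ∨ (b ≤ a ∧ d ≤ c)) :
    max (a + c) (b + d) = max a b + max c d := by
  rcases h with ⟨hab, hcd⟩ | ⟨hba, hdc⟩
  · rw [max_eq_right hab, max_eq_right hcd, max_eq_right (add_le_add hab hcd)]
  · rw [max_eq_left hba, max_eq_left hdc, max_eq_left (add_le_add hba hdc)]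

def AxiomVAt (ℓ : G → ℝ) (g h : G) : Prop :=
  (ℓ (g * h) = ℓ (g * h⁻¹) ∧ ℓ g + ℓ h < ℓ (g * h)) ∨
    max (ℓ (g * h)) (ℓ (g * h⁻¹)) = ℓ g + ℓ h

theorem axiomVAt_self {f : G → ℝ} {g : G} (h0 : 0 ≤ f g) (h1 : f 1 = 0)
    (h2 : f (g * g) = 2 * f g) : AxiomVAt f g g := by
  right
  rw [mul_inv_cancel, h1, h2, max_eq_left (by linarith)]
  ring

namespace IsLengthFunction

variable {ℓ : G → ℝ} (hℓ : IsLengthFunction ℓ)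
include hℓ

theorem nonneg (x : G) : 0 ≤ ℓ x := hℓ.1 x

theorem map_one : ℓ 1 = 0 := hℓ.2.1

theorem map_inv (x : G) : ℓ x⁻¹ = ℓ x := (hℓ.2.2.1 x).symm

theorem map_conj (x y : G) : ℓ (y * x * y⁻¹) = ℓ x := hℓ.2.2.2.1 x y

theorem map_mul_comm (x y : G) : ℓ (x * y) = ℓ (y * x) := by
  rw [← hℓ.map_conj (x * y) y, mul_assoc, mul_inv_cancel_right]

theorem axiomIV (x y : G) :
    ℓ (x * y) = ℓ (x * y⁻¹) ∨ max (ℓ (x * y)) (ℓ (x * y⁻¹)) ≤ ℓ x + ℓ y :=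
  hℓ.2.2.2.2.1 x y

theorem axiomV {x y : G} (hx : 0 < ℓ x) (hy : 0 < ℓ y) : AxiomVAt ℓ x y :=
  hℓ.2.2.2.2.2.1 x y hx hy

theorem map_mul_self (x : G) : ℓ (x * x) = 2 * ℓ x := by
  rcases (hℓ.nonneg x).eq_or_lt' with hx | hx
  · rcases hℓ.axiomIV x x with e | e
    · rw [e, mul_inv_cancel, hℓ.map_one, hx, mul_zero]
    · linarith [le_max_left (ℓ (x * x)) (ℓ (x * x⁻¹)), hℓ.nonneg (x * x)]
  · rcases hℓ.axiomV hx hx with ⟨e, hlt⟩ | e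
    · rw [e, mul_inv_cancel, hℓ.map_one] at hlt
      linarith
    · rw [mul_inv_cancel, hℓ.map_one, max_eq_left (hℓ.nonneg _)] at e
      linarith

theorem map_mul_eq_of_add_lt {x y : G} (h : ℓ x + ℓ y < ℓ (x * y)) :
    ℓ (x * y) = ℓ (x * y⁻¹) :=
  (hℓ.axiomIV x y).resolve_right fun e => (le_max_left _ _).trans e |>.not_gt h

theorem mem_disjointSet_of_add_lt {x y : G} (h : ℓ x + ℓ y < ℓ (x * y)) :
    (x, y) ∈ DisjointSet ℓ := by
  refine ⟨?_, hℓ.map_mul_eq_of_add_lt h, h⟩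
  intro (hxy : x = y)
  rw [hxy, hℓ.map_mul_self] at h
  linarith

theorem add_le_max {x y : G} (hx : 0 < ℓ x) (hy : 0 < ℓ y) :
    ℓ x + ℓ y ≤ max (ℓ (x * y)) (ℓ (x * y⁻¹)) := by
  rcases hℓ.axiomV hx hy with ⟨-, hlt⟩ | e
  · exact hlt.le.trans (le_max_left _ _)
  · exact e.ge

theorem add_le_of_map_mul_eq {x y : G} (hx : 0 < ℓ x) (hy : 0 < ℓ y)
    (h : ℓ (x * y) = ℓ (x * y⁻¹)) : ℓ x + ℓ y ≤ ℓ (x * y) := by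
  simpa only [← h, max_self] using hℓ.add_le_max hx hy

theorem axiomVAt_of_add_le_max {x y : G} (h : ℓ x + ℓ y ≤ max (ℓ (x * y)) (ℓ (x * y⁻¹))) :
    AxiomVAt ℓ x y := by
  rcases hℓ.axiomIV x y with e | e
  · rw [← e, max_self] at h
    rcases h.lt_or_eq with hlt | heq
    · exact Or.inl ⟨e, hlt⟩
    · exact Or.inr (by rw [← e, max_self, heq])
  · exact Or.inr (le_antisymm e h)

theorem mem_disjointSet_of_lt_of_map_eq_zero {g x : G} (hg : ℓ g = 0)
    (hx : ℓ x < ℓ (x * g⁻¹)) :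
    (x, g⁻¹) ∈ DisjointSet ℓ :=
  hℓ.mem_disjointSet_of_add_lt (by rwa [hℓ.map_inv, hg, add_zero])

theorem two_mul_le_map_mul_conj_of_map_eq_zero {g h : G} (hg : ℓ g = 0)
    (hh : ℓ (g * h) < ℓ h) :
    2 * ℓ h ≤ ℓ (g * (h * g * h⁻¹)) := by
  have hD := hℓ.mem_disjointSet_of_lt_of_map_eq_zero hg (x := g * h) (by rwa [hℓ.map_conj])
  have hghg : ℓ (g * h * g) = ℓ h := by
    have := hD.2.1
    rw [inv_inv, hℓ.map_conj] at this
    exact this.symm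
  have hhpos : 0 < ℓ h := (hℓ.nonneg _).trans_lt hh
  have hsq : ℓ (h * (g * h * g)) = 2 * ℓ (g * h) := by
    rw [show h * (g * h * g) = h * g * (h * g) by group, hℓ.map_mul_self, hℓ.map_mul_comm]
  have hV := hℓ.add_le_max hhpos (hghg ▸ hhpos)
  rw [hghg, hsq, show h * (g * h * g)⁻¹ = (g * (h * g * h⁻¹))⁻¹ by group, hℓ.map_inv] at hV
  rcases le_max_iff.mp hV with h' | h' <;> linarith

end IsLengthFunction

theorem CompatibleCombinatorics.symm {ℓ m : G → ℝ} (h : CompatibleCombinatorics ℓ m) :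
    CompatibleCombinatorics m ℓ :=
  ⟨(Set.inter_comm _ _).trans h.2, (Set.inter_comm _ _).trans h.1⟩

theorem map_mul_eq_of_mem_disjointSet {ℓ m : G → ℝ} (hc : DisjointSet ℓ ∩ OverlapSet m = ∅)
    {x y : G} (hD : (x, y) ∈ DisjointSet ℓ) : m (x * y) = m (x * y⁻¹) := by
  by_contra hne
  exact (Set.eq_empty_iff_forall_notMem.mp hc) (x, y) ⟨hD, hD.1, hne⟩

section Elliptic

variable {ℓ m : G → ℝ} (hℓ : IsLengthFunction ℓ) (hm : IsLengthFunction m)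
  (hc : DisjointSet ℓ ∩ OverlapSet m = ∅) {g : G} (hg : ℓ g = 0) (hmg : 0 < m g)
include hℓ hm hc hg hmg

theorem add_le_of_map_mul_lt {y : G} (hy : ℓ (g * y) < ℓ y) (hmy : 0 < m (g * y)) :
    m (g * y) + m g ≤ m y := by
  have hD : (y * g, g⁻¹) ∈ DisjointSet ℓ :=
    hℓ.mem_disjointSet_of_lt_of_map_eq_zero hg (by rwa [mul_inv_cancel_right, ← hℓ.map_mul_comm])
  have hmD := map_mul_eq_of_mem_disjointSet hc hD
  rw [mul_inv_cancel_right, inv_inv] at hmD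
  rw [hm.map_mul_comm g y, hmD]
  exact hm.add_le_of_map_mul_eq (by rwa [hm.map_mul_comm]) hmg (by rw [mul_inv_cancel_right, hmD])

theorem two_mul_le_map_mul_conj_of_compatible {h : G} (hh : ℓ (g * h) < ℓ h) :
    2 * m g ≤ m (g * (h * g * h⁻¹)) := by
  have hlong := hℓ.two_mul_le_map_mul_conj_of_map_eq_zero hg hh
  have hD : (g, h * g * h⁻¹) ∈ DisjointSet ℓ :=
    hℓ.mem_disjointSet_of_add_lt (by rw [hℓ.map_conj, hg]; linarith [hℓ.nonneg (g * h)])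
  have hmD := map_mul_eq_of_mem_disjointSet hc hD
  have := hm.add_le_of_map_mul_eq hmg (by rwa [hm.map_conj]) hmD
  rw [hm.map_conj] at this
  linarith

theorem le_map_mul_of_map_eq_zero {h : G} (hh : ℓ (g * h) < ℓ h) (hmh : m h = 0) :
    m g ≤ m (g * h) := by
  have hD := hℓ.mem_disjointSet_of_lt_of_map_eq_zero hg (x := g * h) (by rwa [hℓ.map_conj])
  have hmghg : m (g * h * g) = 0 := by
    have := map_mul_eq_of_mem_disjointSet hc hD
    rw [inv_inv, hm.map_conj, hmh] at this
    exact this.symm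
  have hconj := two_mul_le_map_mul_conj_of_compatible hℓ hm hc hg hmg hh
  rw [show g * (h * g * h⁻¹) = g * h * g * h⁻¹ by group] at hconj
  have := hm.map_mul_eq_of_add_lt (x := g * h * g) (y := h⁻¹)
    (by rw [hmghg, hm.map_inv, hmh]; linarith)
  rw [inv_inv, show g * h * g * h = g * h * (g * h) by group, hm.map_mul_self] at this
  linarith

theorem le_max_of_map_eq_zero (h : G) : ℓ h ≤ max (ℓ (g * h)) (ℓ (g * h⁻¹)) := by
  by_contra! hlt
  obtain ⟨hh, hh'⟩ := max_lt_iff.mp hlt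
  rw [← hℓ.map_inv h] at hh'
  have hmax : m g + m h ≤ max (m (g * h)) (m (g * h⁻¹)) := by
    rcases (hm.nonneg h).eq_or_lt' with hmh | hmh
    · rw [hmh, add_zero]
      exact le_max_of_le_left (le_map_mul_of_map_eq_zero hℓ hm hc hg hmg hh hmh)
    · exact hm.add_le_max hmg hmh
  rcases le_max_iff.mp hmax with hA | hB
  · linarith [add_le_of_map_mul_lt hℓ hm hc hg hmg hh (by linarith [hm.nonneg h])]
  · have := add_le_of_map_mul_lt hℓ hm hc hg hmg hh' (by linarith [hm.nonneg h])
    rw [hm.map_inv] at this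
    linarith

end Elliptic

theorem IsLengthFunction.axiomVAt_of_compatible {ℓ m : G → ℝ} (hℓ : IsLengthFunction ℓ)
    (hm : IsLengthFunction m) (hc : DisjointSet ℓ ∩ OverlapSet m = ∅) {g h : G}
    (hg : 0 < ℓ g + m g) (hh : 0 < ℓ h + m h) : AxiomVAt ℓ g h := by
  rcases (hℓ.nonneg g).eq_or_lt' with hg0 | hgpos
  · refine hℓ.axiomVAt_of_add_le_max ?_
    rw [hg0, zero_add]
    exact le_max_of_map_eq_zero hℓ hm hc hg0 (by linarith) h
  rcases (hℓ.nonneg h).eq_or_lt' with hh0 | hhpos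
  · refine hℓ.axiomVAt_of_add_le_max ?_
    rw [hh0, add_zero, hℓ.map_mul_comm, ← hℓ.map_inv (g * h⁻¹), mul_inv_rev, inv_inv]
    exact le_max_of_map_eq_zero hℓ hm hc hh0 (by linarith) g
  exact hℓ.axiomV hgpos hhpos

theorem AxiomVAt.add {ℓ m : G → ℝ} {g h : G} (hℓ : AxiomVAt ℓ g h) (hm : AxiomVAt m g h)
    (hDℓ : ℓ (g * h) = ℓ (g * h⁻¹) → ℓ g + ℓ h < ℓ (g * h) → m (g * h) = m (g * h⁻¹))
    (hDm : m (g * h) = m (g * h⁻¹) → m g + m h < m (g * h) → ℓ (g * h) = ℓ (g * h⁻¹))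
    (hco : ℓ (g * h) ≠ ℓ (g * h⁻¹) → m (g * h) ≠ m (g * h⁻¹) →
      (ℓ (g * h⁻¹) < ℓ (g * h) ↔ m (g * h⁻¹) < m (g * h))) :
    AxiomVAt (ℓ + m) g h := by
  simp only [AxiomVAt, Pi.add_apply]
  rcases hℓ with ⟨hℓe, hℓlt⟩ | hℓmax <;> rcases hm with ⟨hme, hmlt⟩ | hmmax
  · exact Or.inl ⟨by rw [hℓe, hme], by linarith⟩
  · have hme := hDℓ hℓe hℓlt
    rw [← hme, max_self] at hmmax
    exact Or.inl ⟨by rw [hℓe, hme], by linarith⟩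
  · have hℓe := hDm hme hmlt
    rw [← hℓe, max_self] at hℓmax
    exact Or.inl ⟨by rw [hℓe, hme], by linarith⟩
  · have horder : (ℓ (g * h) ≤ ℓ (g * h⁻¹) ∧ m (g * h) ≤ m (g * h⁻¹)) ∨
        (ℓ (g * h⁻¹) ≤ ℓ (g * h) ∧ m (g * h⁻¹) ≤ m (g * h)) := by
      by_cases hℓe : ℓ (g * h) = ℓ (g * h⁻¹)
      · rcases le_total (m (g * h)) (m (g * h⁻¹)) with hc | hc
        · exact Or.inl ⟨hℓe.le, hc⟩
        · exact Or.inr ⟨hℓe.ge, hc⟩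
      by_cases hme : m (g * h) = m (g * h⁻¹)
      · rcases le_total (ℓ (g * h)) (ℓ (g * h⁻¹)) with hc | hc
        · exact Or.inl ⟨hc, hme.le⟩
        · exact Or.inr ⟨hc, hme.ge⟩
      have horient := hco hℓe hme
      rcases lt_or_gt_of_ne hℓe with hlt | hgt
      · exact Or.inl ⟨hlt.le, le_of_not_gt fun h' => hlt.not_gt (horient.mpr h')⟩
      · exact Or.inr ⟨hgt.le, (horient.mp hgt).le⟩
    right
    rw [max_add_add_eq_max_add_max horder, hℓmax, hmmax]
    ring

end

/-- if `ℓ` and `m` have compatible combinatorics and are coherently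
oriented, then `ℓ + m` satisfies length-function axiom V. -/
theorem sum_axiom_V {G : Type*} [Group G] (ℓ m : G → ℝ)
    (hℓ : IsLengthFunction ℓ) (hm : IsLengthFunction m)
    (hcc : CompatibleCombinatorics ℓ m) (hco : CoherentlyOriented ℓ m) :
    ∀ g h : G, 0 < ℓ g + m g → 0 < ℓ h + m h →
      (ℓ (g * h) + m (g * h) = ℓ (g * h⁻¹) + m (g * h⁻¹) ∧
        (ℓ g + m g) + (ℓ h + m h) < ℓ (g * h) + m (g * h)) ∨
      max (ℓ (g * h) + m (g * h)) (ℓ (g * h⁻¹) + m (g * h⁻¹)) =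
        (ℓ g + m g) + (ℓ h + m h) := by
  intro g h hg hh
  by_cases hgh : g = h
  · subst hgh
    exact axiomVAt_self (f := ℓ + m) (add_nonneg (hℓ.nonneg g) (hm.nonneg g))
      (by simp only [Pi.add_apply, hℓ.map_one, hm.map_one, add_zero])
      (by simp only [Pi.add_apply, hℓ.map_mul_self, hm.map_mul_self]; ring)
  exact AxiomVAt.add (hℓ.axiomVAt_of_compatible hm hcc.2 hg hh)
    (hm.axiomVAt_of_compatible hℓ hcc.symm.2 (by linarith) (by linarith))
    (fun he hlt => map_mul_eq_of_mem_disjointSet hcc.2 ⟨hgh, he, hlt⟩)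
    (fun he hlt => map_mul_eq_of_mem_disjointSet hcc.symm.2 ⟨hgh, he, hlt⟩)
    (fun hℓo hmo => hco (g, h) ⟨⟨hgh, hℓo⟩, hgh, hmo⟩)
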